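/- arXiv:1102.1870 — 4 statements merged into one kernel-verified Lean document; each statement's English description precedes it below -/
import Mathlib

section
/- Let R be a commutative ring, A a commutative R-algebra, M an A-module, and D : A → M an R-derivation. Let ω ∈ M and let S ∈ Aˣ. Then there exists a unit a ∈ Aˣ with (↑a⁻¹ : A) • D ↑a = -ω if and only if there exists a unit a' ∈ Aˣ with (↑a'⁻¹ : A) • D ↑a' = -(ω - (↑S⁻¹ : A) • D ↑S). (This is the rank-one (line bundle) case of the paper's Proposition 5 on gauge invariance of framability, where ω' = ∂̄_b S⁻¹ · S + S⁻¹ ω S = ω - S⁻¹ ∂̄_b S in the commutative case.) -/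
/-! Right multiplication by `S` permutes the units of `A`, and the logarithmic derivative
`u ↦ u⁻¹ • D u` turns it into translation by `S⁻¹ • D S`. -/

namespace Derivation

variable {R A M : Type*} [CommSemiring R] [CommSemiring A] [Algebra R A]
  [AddCommMonoid M] [Module A M] [Module R M]

def unitLogDeriv (D : Derivation R A M) (u : Aˣ) : M :=
  (↑u⁻¹ : A) • D ↑u

theorem unitLogDeriv_mul (D : Derivation R A M) (u v : Aˣ) :
    D.unitLogDeriv (u * v) = D.unitLogDeriv u + D.unitLogDeriv v := by
  have hu : (↑(u * v)⁻¹ : A) * ↑u = ↑v⁻¹ := by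
    rw [mul_inv_rev, Units.val_mul, mul_assoc, Units.inv_mul, mul_one]
  have hv : (↑(u * v)⁻¹ : A) * ↑v = ↑u⁻¹ := by
    rw [mul_comm u v, mul_inv_rev, Units.val_mul, mul_assoc, Units.inv_mul, mul_one]
  rw [unitLogDeriv, Units.val_mul, leibniz, smul_add, smul_smul, smul_smul, hu, hv, add_comm]
  rfl

end Derivation

theorem stmt2_general {R A M : Type*} [CommRing R] [CommRing A] [Algebra R A]
    [AddCommGroup M] [Module A M] [Module R M]
    (D : Derivation R A M) (ω : M) (S : Aˣ) :
    (∃ a : Aˣ, (↑a⁻¹ : A) • D ↑a = -ω) ↔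
      (∃ a' : Aˣ, (↑a'⁻¹ : A) • D ↑a' = -(ω - (↑S⁻¹ : A) • D ↑S)) := by
  change (∃ a, D.unitLogDeriv a = -ω) ↔ ∃ a', D.unitLogDeriv a' = -(ω - D.unitLogDeriv S)
  conv_rhs => rw [(Equiv.mulRight S).surjective.exists]
  refine exists_congr fun a => ?_
  rw [Equiv.coe_mulRight, D.unitLogDeriv_mul, neg_sub, sub_eq_neg_add]
  exact (add_left_inj (D.unitLogDeriv S)).symm

/-- Rank-one case of the paper's Proposition 5: `ω` is framable iff
`ω' = ω - S⁻¹ • D S` is framable. -/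
theorem stmt2 {R A M : Type*} [CommRing R] [CommRing A] [Algebra R A]
    [AddCommGroup M] [Module A M] [Module R M] [IsScalarTower R A M]
    (D : Derivation R A M) (ω : M) (S : Aˣ) :
    (∃ a : Aˣ, (↑a⁻¹ : A) • D ↑a = -ω) ↔
      (∃ a' : Aˣ, (↑a'⁻¹ : A) • D ↑a' = -(ω - (↑S⁻¹ : A) • D ↑S)) :=
  stmt2_general D ω S
end

section
/- Let A be a commutative ring and D : A → A a derivation. Assume: (i) for every μ ∈ A there exists a unit a ∈ Aˣ with (↑a⁻¹ : A) * D ↑a = μ, and (ii) for every μ ∈ A there exists s ∈ A with D s = μ. Then for all ω₁, ω₂ ∈ A the 2×2 matrix ω = !![ω₁, ω₂; 0, 0] is framable: there exists an invertible matrix a ∈ Matrix (Fin 2) (Fin 2) A with a⁻¹ * (a.map D) = -ω. (This is the algebraic core of the paper's Theorem 2: if all CR line bundle structures over a 3-dimensional CR manifold were framable, then every rank-2 CR vector bundle structure admitting a nowhere-vanishing CR section — i.e. one with vanishing second row in a suitable frame — would be framable.) -/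
/-! A frame is an invertible `a` with `a.map D = a * -ω`. For `ω = !![ω₁, ω₂; 0, 0]` the
upper-triangular `a = !![u, s; 0, 1]` works as soon as `D u = -u ω₁`, i.e. `u` frames the line
bundle structure `ω₁` (given by (i)), and `D s = -u ω₂` (solvable by (ii)). -/

section

variable {A : Type*} [CommRing A]

def derivationOfLeibniz (D : A → A) (hD_add : ∀ x y : A, D (x + y) = D x + D y)
    (hD_mul : ∀ x y : A, D (x * y) = x * D y + y * D x) : Derivation ℤ A A :=
  Derivation.mk' (AddMonoidHom.mk' D hD_add).toIntLinearMap hD_mul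

def upperFrame (u : Aˣ) (s : A) : Matrix (Fin 2) (Fin 2) A := !![(u : A), s; 0, 1]

theorem isUnit_det_upperFrame (u : Aˣ) (s : A) : IsUnit (upperFrame u s).det := by
  simp [upperFrame, Matrix.det_fin_two_of]

theorem map_upperFrame {R : Type*} [CommRing R] [Algebra R A] (d : Derivation R A A) {u : Aˣ}
    {s ω₁ ω₂ : A} (hu : d u = u * -ω₁) (hs : d s = u * -ω₂) :
    (upperFrame u s).map d = upperFrame u s * -!![ω₁, ω₂; 0, 0] := by
  ext i j
  fin_cases i <;> fin_cases j <;> simp [upperFrame, hu, hs, Matrix.mul_apply]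

end

/-- Algebraic core of the paper's Theorem 2: if every line bundle structure is
framable (i) and the linear equation `D s = μ` is always solvable (ii), then every
rank-2 structure with vanishing second row is framable. -/
theorem stmt3 {A : Type*} [CommRing A]
    (D : A → A)
    (hD_add : ∀ x y : A, D (x + y) = D x + D y)
    (hD_mul : ∀ x y : A, D (x * y) = x * D y + y * D x)
    (h1 : ∀ μ : A, ∃ a : Aˣ, (↑a⁻¹ : A) * D ↑a = μ)
    (h2 : ∀ μ : A, ∃ s : A, D s = μ)
    (ω₁ ω₂ : A) :
    ∃ a : Matrix (Fin 2) (Fin 2) A, IsUnit a ∧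
      a⁻¹ * a.map D = -(!![ω₁, ω₂; 0, 0]) := by
  let d := derivationOfLeibniz D hD_add hD_mul
  obtain ⟨u, hu⟩ := h1 (-ω₁)
  obtain ⟨s, hs⟩ := h2 (u * -ω₂)
  have hdu : d u = u * -ω₁ := (Units.inv_mul_eq_iff_eq_mul u).1 hu
  have hdet := isUnit_det_upperFrame u s
  refine ⟨upperFrame u s, (Matrix.isUnit_iff_isUnit_det _).2 hdet, ?_⟩
  change _ * (upperFrame u s).map d = _
  rw [map_upperFrame d hdu hs, Matrix.nonsing_inv_mul_cancel_left _ _ hdet]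
end

section
/- Let A be a commutative ℝ-algebra, M an A-module which is also an ℝ-vector space such that the ℝ-action is compatible with the A-action, and D : A → M an ℝ-derivation. Let ω₀ ∈ M. If there exists some δ > 0 such that δ • ω₀ is not framable, then for every ε > 0 there exists δ' with 0 < δ' < ε such that δ' • ω₀ is not framable. (This is the algebraic core of the paper's Theorem 3: the infimum c = inf{δ : δω₀ is non-framable} cannot be positive, so non-framable CR line bundle structures exist arbitrarily close to any framable structure.) -/
/-!
The logarithmic derivative `a ↦ a⁻¹ • D a` is a homomorphism from the units of `A` to `M`, so its
image, the set of framable forms, is closed under multiplication by natural numbers. Hence if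
`δ • ω₀` is not framable, neither is `(δ / n) • ω₀` for any `n ≥ 1`, and `δ / n` is as small as
we like.
-/

section Leibniz

variable {A M : Type*} [CommSemiring A] [AddCommGroup M] [Module A M] {D : A → M}

def Framable (D : A → M) (ω : M) : Prop :=
  ∃ a : Aˣ, (↑a⁻¹ : A) • D ↑a = -ω

theorem leibniz_map_one (hD : ∀ x y : A, D (x * y) = x • D y + y • D x) : D 1 = 0 := by
  have h := hD 1 1
  rw [mul_one, one_smul] at h
  exact add_eq_left.mp h.symm

theorem leibniz_logDeriv_units_mul (hD : ∀ x y : A, D (x * y) = x • D y + y • D x)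
    (a b : Aˣ) :
    (↑(a * b)⁻¹ : A) • D ↑(a * b) = (↑a⁻¹ : A) • D ↑a + (↑b⁻¹ : A) • D ↑b := by
  have hb : (↑(a * b)⁻¹ : A) * b = ↑a⁻¹ := by
    rw [← Units.val_mul, mul_comm a b, mul_inv_rev, inv_mul_cancel_right]
  have ha : (↑(a * b)⁻¹ : A) * a = ↑b⁻¹ := by
    rw [← Units.val_mul, mul_inv_rev, inv_mul_cancel_right]
  rw [Units.val_mul, hD, smul_add, smul_smul, smul_smul, ha, hb, add_comm]

theorem leibniz_logDeriv_units_pow (hD : ∀ x y : A, D (x * y) = x • D y + y • D x)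
    (a : Aˣ) (n : ℕ) :
    (↑(a ^ n)⁻¹ : A) • D ↑(a ^ n) = n • ((↑a⁻¹ : A) • D ↑a) := by
  induction n with
  | zero => simp only [pow_zero, inv_one, Units.val_one, leibniz_map_one hD, smul_zero, zero_smul]
  | succ n ih => rw [pow_succ, leibniz_logDeriv_units_mul hD, ih, succ_nsmul]

theorem Framable.nsmul (hD : ∀ x y : A, D (x * y) = x • D y + y • D x) {ω : M}
    (hω : Framable D ω) (n : ℕ) : Framable D (n • ω) := by
  obtain ⟨a, ha⟩ := hω
  exact ⟨a ^ n, by rw [leibniz_logDeriv_units_pow hD, ha, smul_neg]⟩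

end Leibniz

theorem stmt6_general {A M : Type*} [CommRing A]
    [AddCommGroup M] [Module A M] [Module ℝ M]
    (D : A → M)
    (hD_mul : ∀ x y : A, D (x * y) = x • D y + y • D x)
    (ω₀ : M)
    (h : ∃ δ : ℝ, 0 < δ ∧ ¬ ∃ a : Aˣ, (↑a⁻¹ : A) • D ↑a = -(δ • ω₀)) :
    ∀ ε : ℝ, 0 < ε → ∃ δ' : ℝ, 0 < δ' ∧ δ' < ε ∧
      ¬ ∃ a : Aˣ, (↑a⁻¹ : A) • D ↑a = -(δ' • ω₀) := by
  obtain ⟨δ, hδ, hnot⟩ := h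
  intro ε hε
  obtain ⟨n, hn⟩ := exists_nat_gt (δ / ε)
  have hn0 : 0 < (n : ℝ) := (div_pos hδ hε).trans hn
  refine ⟨δ / n, div_pos hδ hn0, (div_lt_iff₀ hn0).2 ?_, fun hframable => hnot ?_⟩
  · rwa [div_lt_iff₀ hε, mul_comm] at hn
  · have hmul : n • ((δ / n) • ω₀) = δ • ω₀ := by
      rw [← Nat.cast_smul_eq_nsmul ℝ, smul_smul, mul_div_cancel₀ _ hn0.ne']
    simpa only [Framable, hmul] using Framable.nsmul hD_mul hframable n

/-- Algebraic core of the paper's Theorem 3: if some `δ > 0` makes `δ • ω₀`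
non-framable, then there are arbitrarily small `δ' > 0` with `δ' • ω₀` non-framable. -/
theorem stmt6 {A M : Type*} [CommRing A] [Algebra ℝ A]
    [AddCommGroup M] [Module A M] [Module ℝ M]
    (hcompat : ∀ (r : ℝ) (x : A) (m : M), r • (x • m) = x • (r • m))
    (D : A → M)
    (hD_add : ∀ x y : A, D (x + y) = D x + D y)
    (hD_smul : ∀ (r : ℝ) (x : A), D (r • x) = r • D x)
    (hD_mul : ∀ x y : A, D (x * y) = x • D y + y • D x)
    (ω₀ : M)
    (h : ∃ δ : ℝ, 0 < δ ∧ ¬ ∃ a : Aˣ, (↑a⁻¹ : A) • D ↑a = -(δ • ω₀)) :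
    ∀ ε : ℝ, 0 < ε → ∃ δ' : ℝ, 0 < δ' ∧ δ' < ε ∧
      ¬ ∃ a : Aˣ, (↑a⁻¹ : A) • D ↑a = -(δ' • ω₀) :=
  stmt6_general D hD_mul ω₀ h
end

section
/- Fix n ≥ 1 and smooth coefficient functions c : (Fin n → ℝ) → (Fin n → ℂ) (ContDiff ℝ ⊤), and for a smooth function g : (Fin n → ℝ) → ℂ define (L g)(x) = ∑ j, c x j * (fderiv ℝ g x) (Pi.single j 1). Then for every smooth ω : (Fin n → ℝ) → ℂ the following are equivalent: (1) there exists a smooth function a : (Fin n → ℝ) → ℂ with a x ≠ 0 for all x and (L a)(x) = -(ω x) * (a x) for all x; (2) there exists a smooth function u : (Fin n → ℝ) → ℂ with (L u)(x) = -ω x for all x. (This is the core of the paper's Proposition 4: the nonlinear framability equation a⁻¹ ∂̄_b a = -ω for a CR line bundle structure reduces, via a = e^u and u = log a, to the linear equation ∂̄_b u = -ω; hence all CR line bundle structures over the trivial line bundle are framable if and only if the local ∂̄_b-equation is always solvable.) -/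
open Complex intervalIntegral

/-- Multiplication by a nonzero complex number as a real-linear continuous equivalence. -/
noncomputable def mulCLE (c : ℂ) (hc : c ≠ 0) : ℂ ≃L[ℝ] ℂ :=
  { toFun := fun z => c * z
    invFun := fun z => c⁻¹ * z
    map_add' := mul_add c
    map_smul' := fun r z => by simp [Complex.real_smul]; ring
    left_inv := fun z => by field_simp
    right_inv := fun z => by field_simp
    continuous_toFun := continuous_const.mul continuous_id
    continuous_invFun := continuous_const.mul continuous_id }

@[simp] lemma mulCLE_apply (c : ℂ) (hc : c ≠ 0) (z : ℂ) : mulCLE c hc z = c * z := rfl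

/-- A nowhere-vanishing smooth function on `ℝⁿ` has a smooth global logarithm. -/
lemma exists_smooth_log {n : ℕ} {a : (Fin n → ℝ) → ℂ}
    (ha : ContDiff ℝ (⊤ : ℕ∞) a) (h0 : ∀ x, a x ≠ 0) :
    ∃ u : (Fin n → ℝ) → ℂ, ContDiff ℝ (⊤ : ℕ∞) u ∧ ∀ x, Complex.exp (u x) = a x := by
  have haC : Continuous a := ha.continuous
  have hfdC : Continuous (fderiv ℝ a) := ha.continuous_fderiv (by simp)
  set g : (Fin n → ℝ) → ℝ → ℂ := fun x t => (a (t • x))⁻¹ * (fderiv ℝ a (t • x)) x with hgdef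
  have h1 : Continuous fun p : (Fin n → ℝ) × ℝ => p.2 • p.1 :=
    continuous_snd.smul continuous_fst
  have hgC : Continuous (Function.uncurry g) := by
    apply Continuous.mul
    · exact (haC.comp h1).inv₀ fun p => h0 _
    · exact isBoundedBilinearMap_apply.continuous.comp
        (((hfdC.comp h1).prodMk continuous_fst))
  set u : (Fin n → ℝ) → ℂ := fun x => ∫ t in (0:ℝ)..1, g x t with hudef
  have huC : Continuous u :=
    continuous_parametric_intervalIntegral_of_continuous' hgC 0 1
  -- the key pointwise identity
  have key : ∀ x, Complex.exp (u x) = (a 0)⁻¹ * a x := by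
    intro x
    have hgc : Continuous (g x) := hgC.comp (Continuous.prodMk_right x)
    set v : ℝ → ℂ := fun s => ∫ t in (0:ℝ)..s, g x t with hvdef
    have hvd : ∀ s, HasDerivAt v (g x s) s := fun s =>
      (hgc.integral_hasStrictDerivAt 0 s).hasDerivAt
    have hax : ∀ s : ℝ, HasDerivAt (fun s : ℝ => a (s • x)) ((fderiv ℝ a (s • x)) x) s := by
      intro s
      have h2 : HasDerivAt (fun s : ℝ => s • x) x s := by
        simpa using (hasDerivAt_id s).smul_const x
      exact (((ha.differentiable (by simp)) (s • x)).hasFDerivAt).comp_hasDerivAt s h2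
    have hh : ∀ s : ℝ, HasDerivAt (fun s => Complex.exp (-v s) * a (s • x)) 0 s := by
      intro s
      have h3 : HasDerivAt (fun s => Complex.exp (-v s))
          (Complex.exp (-v s) * (-(g x s))) s := ((hvd s).neg).cexp
      have h4 := h3.mul (hax s)
      refine h4.congr_deriv ?_
      have h5 : a (s • x) ≠ 0 := h0 _
      simp only [hgdef]
      field_simp [hgdef]
      try ring
    have hconst := is_const_of_deriv_eq_zero (𝕜 := ℝ)
      (fun s => (hh s).differentiableAt) (fun s => (hh s).deriv) 1 0
    have hv0 : v 0 = 0 := intervalIntegral.integral_same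
    have hv1 : v 1 = u x := rfl
    rw [hv1, hv0, one_smul, zero_smul, neg_zero, Complex.exp_zero, one_mul] at hconst
    -- hconst : exp (-(u x)) * a x = a 0
    rw [Complex.exp_neg] at hconst
    have hne := Complex.exp_ne_zero (u x)
    have h00 := h0 0
    field_simp at hconst
    field_simp [h00]
    linear_combination -hconst
  -- smoothness of u
  have hsm : ContDiff ℝ (⊤ : ℕ∞) u := by
    rw [contDiff_iff_contDiffAt]
    intro x₀
    have he : ContDiffAt ℝ (⊤ : ℕ∞) Complex.exp (u x₀) :=
      (Complex.contDiff_exp (𝕜 := ℂ)).restrict_scalars ℝ |>.contDiffAt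
    have hf' : HasFDerivAt Complex.exp
        ((mulCLE (Complex.exp (u x₀)) (Complex.exp_ne_zero _) : ℂ ≃L[ℝ] ℂ) : ℂ →L[ℝ] ℂ)
        (u x₀) := by
      have h6 := ((Complex.hasDerivAt_exp (u x₀)).hasFDerivAt).restrictScalars ℝ
      refine h6.congr_fderiv ?_
      ext z
      simp [mul_comm]
    set G := he.localInverse hf' (by simp) with hGdef
    have hGsm : ContDiffAt ℝ (⊤ : ℕ∞) G (Complex.exp (u x₀)) := he.to_localInverse hf' (by simp)
    have hleft : ∀ᶠ z in nhds (u x₀), G (Complex.exp z) = z :=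
      (he.hasStrictFDerivAt' hf' (by simp)).eventually_left_inverse
    have hev : ∀ᶠ x in nhds x₀, G (Complex.exp (u x)) = u x :=
      (huC.continuousAt).eventually hleft
    have heq : u =ᶠ[nhds x₀] fun x => G ((a 0)⁻¹ * a x) := by
      filter_upwards [hev] with x hx
      rw [← key x, hx]
    have hcomp : ContDiffAt ℝ (⊤ : ℕ∞) (fun x => G ((a 0)⁻¹ * a x)) x₀ := by
      have h7 : ContDiffAt ℝ (⊤ : ℕ∞) (fun x => (a 0)⁻¹ * a x) x₀ := (contDiff_const.mul ha).contDiffAt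
      have h8 : ContDiffAt ℝ (⊤ : ℕ∞) G ((a 0)⁻¹ * a x₀) := by rw [← key x₀]; exact hGsm
      exact h8.comp x₀ h7
    exact hcomp.congr_of_eventuallyEq heq
  refine ⟨fun x => Complex.log (a 0) + u x, contDiff_const.add hsm, fun x => ?_⟩
  rw [Complex.exp_add, Complex.exp_log (h0 0), key x]
  field_simp [h0 0]

/-- Core of the paper's Proposition 4: for a first-order complex linear operator
`L g x = ∑ j, c x j * ∂_j g x` (modeling `∂̄_b` in a local chart), the nonlinear
framability equation `L a = -ω a` with `a` nowhere vanishing is solvable iff the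
linear equation `L u = -ω` is solvable. -/
theorem stmt7 {n : ℕ} (hn : 1 ≤ n)
    (c : (Fin n → ℝ) → Fin n → ℂ) (hc : ContDiff ℝ (⊤ : ℕ∞) c)
    (ω : (Fin n → ℝ) → ℂ) (hω : ContDiff ℝ (⊤ : ℕ∞) ω) :
    (∃ a : (Fin n → ℝ) → ℂ, ContDiff ℝ (⊤ : ℕ∞) a ∧ (∀ x, a x ≠ 0) ∧
        ∀ x, (∑ j, c x j * fderiv ℝ a x (Pi.single j 1)) = -(ω x) * a x) ↔
      (∃ u : (Fin n → ℝ) → ℂ, ContDiff ℝ (⊤ : ℕ∞) u ∧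
        ∀ x, (∑ j, c x j * fderiv ℝ u x (Pi.single j 1)) = -(ω x)) := by
  constructor
  · rintro ⟨a, ha, h0, hL⟩
    obtain ⟨u, hu, hexp⟩ := exists_smooth_log ha h0
    refine ⟨u, hu, fun x => ?_⟩
    have hd : HasFDerivAt (fun y => Complex.exp (u y))
        (Complex.exp (u x) • fderiv ℝ u x) x :=
      (((hu.differentiable (by simp)) x).hasFDerivAt).cexp
    have hfun : (fun y => Complex.exp (u y)) = a := funext hexp
    rw [hfun] at hd
    have hda : fderiv ℝ a x = Complex.exp (u x) • fderiv ℝ u x := hd.fderiv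
    have hax : Complex.exp (u x) = a x := hexp x
    have hcalc : ∑ j, c x j * fderiv ℝ a x (Pi.single j 1)
        = a x * ∑ j, c x j * fderiv ℝ u x (Pi.single j 1) := by
      rw [Finset.mul_sum]
      refine Finset.sum_congr rfl fun j _ => ?_
      rw [hda]
      simp [hax]
      ring
    have := hL x
    rw [hcalc] at this
    have h5 := h0 x
    have h6 : a x * (∑ j, c x j * fderiv ℝ u x (Pi.single j 1)) = a x * (-ω x) := by
      rw [this]; ring
    exact mul_left_cancel₀ h5 h6
  · rintro ⟨u, hu, hLu⟩
    refine ⟨fun x => Complex.exp (u x), hu.cexp, fun x => Complex.exp_ne_zero _, fun x => ?_⟩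
    have hd : HasFDerivAt (fun y => Complex.exp (u y))
        (Complex.exp (u x) • fderiv ℝ u x) x :=
      (((hu.differentiable (by simp)) x).hasFDerivAt).cexp
    have hda : fderiv ℝ (fun y => Complex.exp (u y)) x
        = Complex.exp (u x) • fderiv ℝ u x := hd.fderiv
    have hcalc : ∑ j, c x j * fderiv ℝ (fun y => Complex.exp (u y)) x (Pi.single j 1)
        = Complex.exp (u x) * ∑ j, c x j * fderiv ℝ u x (Pi.single j 1) := by
      rw [Finset.mul_sum]
      refine Finset.sum_congr rfl fun j _ => ?_
      rw [hda]
      simp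
      ring
    rw [hcalc, hLu x]
    ring
end
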